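/- arXiv:1502.01613 — 5 statements merged into one kernel-verified Lean document; each statement's English description precedes it below -/
import Mathlib

section
/- Let N ≥ 1 and let H_N be the N×N modified Bessel Hessenberg matrix. Then the characteristic polynomial p_N(λ) = det(λI − H_N) satisfies 2^{N−1} p_N(λ) = T_N(λ), where T_N is the N-th Chebyshev polynomial of the first kind; equivalently, the characteristic polynomial of H_N equals 2^{1−N}·T_N as polynomials over ℝ. -/
/-- The modified Bessel Hessenberg matrix: `(H_N)_{1,2} = 1`, subdiagonal entries `1/2`,
superdiagonal entries `1/2` (for rows `2 ≤ i ≤ N`), all indices here 1-based. -/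
noncomputable def modBesselH (N : ℕ) : Matrix (Fin N) (Fin N) ℝ := fun i j =>
  if (i : ℕ) = 0 ∧ (j : ℕ) = 1 then 1
  else if (j : ℕ) + 1 = (i : ℕ) then 1/2
  else if (i : ℕ) + 1 = (j : ℕ) ∧ 1 ≤ (i : ℕ) then 1/2
  else 0

open Polynomial Matrix

private lemma sum_eq_two_terms {α M : Type*} [Fintype α] [DecidableEq α] [AddCommMonoid M]
    (f : α → M) (a b : α) (hab : a ≠ b) (h : ∀ c, c ≠ a → c ≠ b → f c = 0) :
    ∑ c, f c = f a + f b := by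
  rw [← Finset.sum_pair hab]
  refine (Finset.sum_subset (Finset.subset_univ _) ?_).symm
  intro x _ hx
  simp only [Finset.mem_insert, Finset.mem_singleton, not_or] at hx
  exact h x hx.1 hx.2

private lemma modBesselH_castSucc (n : ℕ) (i j : Fin n) :
    modBesselH (n+1) i.castSucc j.castSucc = modBesselH n i j := by
  simp [modBesselH]

private lemma charmatrix_submatrix_castSucc (n : ℕ) :
    (charmatrix (modBesselH (n+1))).submatrix Fin.castSucc Fin.castSucc
      = charmatrix (modBesselH n) := by
  ext i j
  rcases eq_or_ne i j with rfl | h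
  · simp [modBesselH_castSucc]
  · rw [Matrix.submatrix_apply,
      charmatrix_apply_ne _ _ _ (fun hc => h (Fin.castSucc_injective _ hc)),
      charmatrix_apply_ne _ _ _ h, modBesselH_castSucc]

private lemma modBesselH_val {N : ℕ} (i j : Fin N) (x y : ℕ) (hx : (i : ℕ) = x)
    (hy : (j : ℕ) = y) :
    modBesselH N i j = if x = 0 ∧ y = 1 then 1
      else if y + 1 = x then 1/2
      else if x + 1 = y ∧ 1 ≤ x then 1/2
      else 0 := by
  subst hx hy; rfl

private lemma charpoly_rec (n : ℕ) (hn : 1 ≤ n) :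
    (modBesselH (n+2)).charpoly =
      X * (modBesselH (n+1)).charpoly - C (1/4 : ℝ) * (modBesselH n).charpoly := by
  classical
  set A := charmatrix (modBesselH (n+2)) with hA
  have hsub1 : A.submatrix Fin.castSucc Fin.castSucc = charmatrix (modBesselH (n+1)) :=
    charmatrix_submatrix_castSucc (n+1)
  set a : Fin (n+2) := ⟨n, by omega⟩ with ha
  have hab : a ≠ Fin.last (n+1) := by
    intro h
    have := congrArg Fin.val h
    simp [ha] at this
  have hAlast_a : A (Fin.last (n+1)) a = -C (1/2 : ℝ) := by
    rw [hA, charmatrix_apply_ne _ _ _ (Ne.symm hab),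
      modBesselH_val (Fin.last (n+1)) a (n+1) n rfl rfl,
      if_neg (show ¬(n + 1 = 0 ∧ n = 1) by omega),
      if_pos (show n + 1 = n + 1 from rfl)]
  have hAlast_last : A (Fin.last (n+1)) (Fin.last (n+1)) = X := by
    rw [hA, charmatrix_apply_eq,
      modBesselH_val (Fin.last (n+1)) (Fin.last (n+1)) (n+1) (n+1) rfl rfl,
      if_neg (show ¬(n + 1 = 0 ∧ n + 1 = 1) by omega),
      if_neg (show ¬(n + 1 + 1 = n + 1) by omega),
      if_neg (show ¬(n + 1 + 1 = n + 1 ∧ 1 ≤ n + 1) by omega),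
      map_zero, sub_zero]
  have hzero : ∀ c : Fin (n+2), c ≠ a → c ≠ Fin.last (n+1) → A (Fin.last (n+1)) c = 0 := by
    intro c hca hcb
    have h1 : (c : ℕ) ≠ n := fun h => hca (Fin.ext (by simpa [ha] using h))
    have h2 : (c : ℕ) ≠ n + 1 := fun h => hcb (Fin.ext (by simpa using h))
    have h3 : (c : ℕ) < n + 2 := c.isLt
    rw [hA, charmatrix_apply_ne _ _ _ (Ne.symm hcb),
      modBesselH_val (Fin.last (n+1)) c (n+1) (c : ℕ) rfl rfl,
      if_neg (show ¬(n + 1 = 0 ∧ (c : ℕ) = 1) by omega),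
      if_neg (show ¬((c : ℕ) + 1 = n + 1) by omega),
      if_neg (show ¬(n + 1 + 1 = (c : ℕ) ∧ 1 ≤ n + 1) by omega),
      map_zero, neg_zero]
  -- succAbove facts for a
  have hsa_last : a.succAbove (Fin.last n) = Fin.last (n+1) := by
    rw [Fin.succAbove_of_le_castSucc _ _ (by simp [ha, Fin.le_def])]
    rfl
  have hsa_cast : ∀ k : Fin n, a.succAbove k.castSucc = k.castSucc.castSucc := by
    intro k
    exact Fin.succAbove_of_castSucc_lt _ _ (by simp [ha, Fin.lt_def, k.isLt])
  -- the minor B2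
  set B2 : Matrix (Fin (n+1)) (Fin (n+1)) ℝ[X] :=
    A.submatrix Fin.castSucc a.succAbove with hB2
  have hB2_last : B2 (Fin.last n) (Fin.last n) = -C (1/2 : ℝ) := by
    rw [hB2, Matrix.submatrix_apply, hsa_last]
    have hne : (Fin.last n).castSucc ≠ Fin.last (n+1) := by
      intro h
      have := congrArg Fin.val h
      simp at this
    rw [hA, charmatrix_apply_ne _ _ _ hne,
      modBesselH_val (Fin.last n).castSucc (Fin.last (n+1)) n (n+1) rfl rfl,
      if_neg (show ¬(n = 0 ∧ n + 1 = 1) by omega),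
      if_neg (show ¬(n + 1 + 1 = n) by omega),
      if_pos (show n + 1 = n + 1 ∧ 1 ≤ n by omega)]
  have hB2_zero : ∀ i : Fin (n+1), i ≠ Fin.last n → B2 i (Fin.last n) = 0 := by
    intro i hi
    rw [hB2, Matrix.submatrix_apply, hsa_last]
    have hne : i.castSucc ≠ Fin.last (n+1) := by
      intro h
      have h4 := congrArg Fin.val h
      simp at h4
      have h5 := i.isLt
      omega
    have hiv : (i : ℕ) ≠ n := fun h => hi (Fin.ext (by simpa using h))
    have hlt : (i : ℕ) < n + 1 := i.isLt
    rw [hA, charmatrix_apply_ne _ _ _ hne,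
      modBesselH_val i.castSucc (Fin.last (n+1)) (i : ℕ) (n+1) rfl rfl,
      if_neg (show ¬((i : ℕ) = 0 ∧ n + 1 = 1) by omega),
      if_neg (show ¬(n + 1 + 1 = (i : ℕ)) by omega),
      if_neg (show ¬((i : ℕ) + 1 = n + 1 ∧ 1 ≤ (i : ℕ)) by omega),
      map_zero, neg_zero]
  have hB2_minor :
      B2.submatrix Fin.castSucc Fin.castSucc = charmatrix (modBesselH n) := by
    have : B2.submatrix Fin.castSucc Fin.castSucc
        = (A.submatrix Fin.castSucc Fin.castSucc).submatrix Fin.castSucc Fin.castSucc := by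
      ext i j
      simp [hB2, Matrix.submatrix_apply, hsa_cast j]
    rw [this, hsub1, charmatrix_submatrix_castSucc]
  -- determinant of B2 by expansion along the last column
  have hdetB2 : B2.det = -C (1/2 : ℝ) * (modBesselH n).charpoly := by
    rw [Matrix.det_succ_column B2 (Fin.last n)]
    rw [Fintype.sum_eq_single (Fin.last n) (by
      intro i hi
      rw [hB2_zero i hi]
      ring)]
    rw [hB2_last, Fin.succAbove_last, hB2_minor, Fin.val_last]
    have hpow : ((-1 : ℝ[X]) ^ (n + n)) = 1 := Even.neg_one_pow ⟨n, rfl⟩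
    rw [hpow, Matrix.charpoly]
    ring
  -- main expansion
  rw [Matrix.charpoly, ← hA, Matrix.det_succ_row A (Fin.last (n+1))]
  rw [sum_eq_two_terms _ a (Fin.last (n+1)) hab (by
    intro c hca hcb
    rw [hzero c hca hcb]
    ring)]
  rw [hAlast_a, hAlast_last, Fin.succAbove_last, hsub1, ← hB2, hdetB2]
  have hval : ((Fin.last (n+1) : Fin (n+2)) : ℕ) = n + 1 := rfl
  have haval : ((a : Fin (n+2)) : ℕ) = n := rfl
  rw [hval, haval]
  have hpow1 : ((-1 : ℝ[X]) ^ (n + 1 + n)) = -1 := Odd.neg_one_pow ⟨n, by ring⟩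
  have hpow2 : ((-1 : ℝ[X]) ^ (n + 1 + (n + 1))) = 1 := Even.neg_one_pow ⟨n + 1, by ring⟩
  rw [hpow1, hpow2]
  simp only [Matrix.charpoly]
  have hC : C (1/2 : ℝ) * C (1/2 : ℝ) = C (1/4 : ℝ) := by
    rw [← _root_.map_mul]; norm_num
  linear_combination (-(charmatrix (modBesselH n)).det) * hC

private lemma modBessel_key (n : ℕ) :
    C ((2:ℝ)^n) * (modBesselH (n+1)).charpoly = Polynomial.Chebyshev.T ℝ ((n : ℤ) + 1) := by
  induction n using Nat.strong_induction_on with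
  | _ n ih =>
    rcases n with _ | (_ | m)
    · have h1 : (modBesselH 1).charpoly = X := by
        rw [Matrix.charpoly, Matrix.det_fin_one, charmatrix_apply_eq]
        have : modBesselH 1 0 0 = 0 := by simp [modBesselH]
        rw [this, map_zero, sub_zero]
      rw [h1]
      simp
    · have h1 : (modBesselH 2).charpoly = X ^ 2 - C (1/2 : ℝ) := by
        rw [Matrix.charpoly, Matrix.det_fin_two]
        have e00 : modBesselH 2 0 0 = 0 := by simp [modBesselH]
        have e11 : modBesselH 2 1 1 = 0 := by simp [modBesselH]
        have e01 : modBesselH 2 0 1 = 1 := by simp [modBesselH]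
        have e10 : modBesselH 2 1 0 = 1/2 := by simp [modBesselH]
        rw [charmatrix_apply_eq, charmatrix_apply_eq,
          charmatrix_apply_ne _ _ _ (by decide), charmatrix_apply_ne _ _ _ (by decide),
          e00, e11, e01, e10]
        simp only [map_zero, sub_zero, Polynomial.C_1]
        ring
      show C ((2:ℝ)^1) * (modBesselH 2).charpoly = Polynomial.Chebyshev.T ℝ ((1 : ℤ) + 1)
      rw [h1]
      have hT : Polynomial.Chebyshev.T ℝ ((1 : ℤ) + 1) = 2 * X ^ 2 - 1 := by
        norm_num [Polynomial.Chebyshev.T_two]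
      rw [hT]
      have hC2 : C ((2:ℝ)^1) = 2 := by
        rw [pow_one]; exact map_ofNat Polynomial.C 2
      have hCh : (2 : ℝ[X]) * C (1/2 : ℝ) = 1 := by
        rw [← map_ofNat Polynomial.C 2, ← Polynomial.C_mul]
        norm_num
      rw [hC2]
      linear_combination -hCh
    · show C ((2:ℝ)^(m+2)) * (modBesselH (m+3)).charpoly
        = Polynomial.Chebyshev.T ℝ ((((m:ℕ)+2 : ℕ) : ℤ) + 1)
      have h1 := ih (m+1) (by omega)
      have h0 := ih m (by omega)
      rw [charpoly_rec (m+1) (by omega)]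
      have hT := Polynomial.Chebyshev.T_add_two ℝ ((m : ℤ) + 1)
      have hc1 : (C ((2:ℝ)^(m+2))) = 2 * C ((2:ℝ)^(m+1)) := by
        rw [pow_succ, Polynomial.C_mul, map_ofNat Polynomial.C 2, mul_comm]
      have hc2 : (C ((2:ℝ)^(m+2))) * C (1/4 : ℝ) = C ((2:ℝ)^m) := by
        rw [← Polynomial.C_mul]
        congr 1
        ring
      push_cast at h1 h0 ⊢
      have e1 : ((m : ℤ) + 2 + 1) = ((m : ℤ) + 1 + 2) := by ring
      have e2 : ((m : ℤ) + 1 + 1) = ((m : ℤ) + 2) := by ring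
      rw [e2] at h1
      rw [e1, hT, e2]
      linear_combination X * (modBesselH (m+2)).charpoly * hc1 + 2 * X * h1
        - (modBesselH (m+1)).charpoly * hc2 - h0

/-- The characteristic polynomial `p_N(λ) = det(λI - H_N)` of the modified Bessel Hessenberg
matrix satisfies `2^(N-1) p_N = T_N`, the `N`-th Chebyshev polynomial of the first kind. -/
theorem charpoly_modBesselH_eq_chebyshev (N : ℕ) (hN : 1 ≤ N) :
    Polynomial.C ((2 : ℝ) ^ (N - 1)) * (modBesselH N).charpoly =
      Polynomial.Chebyshev.T ℝ (N : ℤ) := by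
  obtain ⟨n, rfl⟩ : ∃ n, N = n + 1 := ⟨N - 1, by omega⟩
  have := modBessel_key n
  simpa using this
end

section
/- Let N ≥ 1 and let H_N be the N×N modified Bessel Hessenberg matrix. Then H_N is annihilated by the N-th Chebyshev polynomial of the first kind: T_N(H_N) = 0. Consequently, −2^N H_N^N e_1 = Σ_{i=0}^{N−1} 2 T_{N,i} H_N^i e_1, where T_{N,i} is the coefficient of x^i in T_N(x). -/
/-- The first standard basis vector of `ℝ^N`. -/
noncomputable def e1 (N : ℕ) : Fin N → ℝ := fun j => if (j : ℕ) = 0 then 1 else 0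


open Polynomial Polynomial.Chebyshev Matrix

noncomputable def stdE (N k : ℕ) : Fin N → ℝ := fun j => if (j : ℕ) = k then 1 else 0

lemma stdE_zero (N k : ℕ) (h : N ≤ k) : stdE N k = 0 := by
  funext j
  have := j.2
  simp only [stdE, Pi.zero_apply, ite_eq_right_iff]
  intro hj; omega

lemma sum_mulVec {N : ℕ} {ι : Type*} (s : Finset ι) (f : ι → Matrix (Fin N) (Fin N) ℝ)
    (v : Fin N → ℝ) : (∑ i ∈ s, f i) *ᵥ v = ∑ i ∈ s, f i *ᵥ v := by
  induction s using Finset.cons_induction <;> simp [Matrix.add_mulVec, *]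

lemma mulVec_stdE {N : ℕ} (A : Matrix (Fin N) (Fin N) ℝ) (k : ℕ) (hk : k < N) :
    A *ᵥ stdE N k = fun i => A i ⟨k, hk⟩ := by
  funext i
  have h : ∀ j : Fin N, ((j : ℕ) = k) = (j = ⟨k, hk⟩) := by
    intro j; rw [eq_iff_iff, Fin.ext_iff]
  simp [Matrix.mulVec, dotProduct, stdE, h, mul_ite, Finset.sum_ite_eq']

lemma col0 {N : ℕ} (h0 : 0 < N) :
    modBesselH N *ᵥ stdE N 0 = (1/2 : ℝ) • stdE N 1 := by
  rw [mulVec_stdE _ 0 h0]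
  funext i
  simp only [modBesselH, stdE, Pi.smul_apply, smul_eq_mul]
  split_ifs <;> first | (norm_num; done) | (exfalso; omega) | (exfalso; tauto)

lemma col1 {N : ℕ} (h2 : 1 < N) :
    modBesselH N *ᵥ stdE N 1 = stdE N 0 + (1/2 : ℝ) • stdE N 2 := by
  rw [mulVec_stdE _ 1 h2]
  funext i
  simp only [modBesselH, stdE, Pi.add_apply, Pi.smul_apply, smul_eq_mul]
  split_ifs <;> first | (norm_num; done) | (exfalso; omega) | (exfalso; tauto)

lemma colk {N : ℕ} (k : ℕ) (hk : k + 2 < N) :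
    modBesselH N *ᵥ stdE N (k+2) =
      (1/2 : ℝ) • stdE N (k+1) + (1/2 : ℝ) • stdE N (k+3) := by
  rw [mulVec_stdE _ (k+2) (by omega)]
  funext i
  simp only [modBesselH, stdE, Pi.add_apply, Pi.smul_apply, smul_eq_mul]
  split_ifs <;> first | (norm_num; done) | (exfalso; omega) | (exfalso; tauto)

lemma aeval_T_add_two {N : ℕ} (M : Matrix (Fin N) (Fin N) ℝ) (k : ℕ) :
    aeval M (T ℝ ((k+2 : ℕ) : ℤ)) =
      2 * (M * aeval M (T ℝ ((k+1 : ℕ) : ℤ))) - aeval M (T ℝ ((k : ℕ) : ℤ)) := by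
  have h : ((k+2 : ℕ) : ℤ) = ((k : ℕ) : ℤ) + 2 := by push_cast; ring
  have h1 : ((k+1 : ℕ) : ℤ) = ((k : ℕ) : ℤ) + 1 := by push_cast; ring
  rw [h, h1, T_add_two]
  simp [mul_assoc, map_ofNat]

lemma cheb_step {N : ℕ} (M : Matrix (Fin N) (Fin N) ℝ) (v : Fin N → ℝ) (k : ℕ) :
    aeval M (T ℝ ((k+2 : ℕ) : ℤ)) *ᵥ v =
      (2 : ℝ) • (M *ᵥ (aeval M (T ℝ ((k+1 : ℕ) : ℤ)) *ᵥ v)) -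
        aeval M (T ℝ ((k : ℕ) : ℤ)) *ᵥ v := by
  rw [aeval_T_add_two, Matrix.sub_mulVec, two_mul, Matrix.add_mulVec, ← Matrix.mulVec_mulVec]
  module

lemma key {N : ℕ} (h0 : 0 < N) :
    ∀ k : ℕ, k ≤ N →
      (aeval (modBesselH N) (T ℝ (k : ℤ))) *ᵥ stdE N 0 =
        if k = 0 then stdE N 0 else (1/2 : ℝ) • stdE N k := by
  intro k
  induction k using Nat.strong_induction_on with
  | _ k ih =>
    match k with
    | 0 => intro _; simp [T_zero]
    | 1 =>
      intro h1
      simp only [Nat.cast_one, T_one, aeval_X, if_neg one_ne_zero]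
      exact col0 h0
    | 2 =>
      intro h2
      have hstep := cheb_step (modBesselH N) (stdE N 0) 0
      rw [show (0+2 : ℕ) = 2 from rfl, show (0+1 : ℕ) = 1 from rfl] at hstep
      rw [hstep]
      simp only [Nat.cast_one, Nat.cast_zero, T_one, T_zero, aeval_X,
        _root_.map_one, Matrix.one_mulVec]
      rw [col0 h0, Matrix.mulVec_smul, col1 (by omega), if_neg (by omega)]
      module
    | (m+3) =>
      intro h3
      have ih2 := ih (m+2) (by omega) (by omega)
      rw [if_neg (by omega)] at ih2
      have ih1 := ih (m+1) (by omega) (by omega)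
      rw [if_neg (by omega)] at ih1
      have hstep := cheb_step (modBesselH N) (stdE N 0) (m+1)
      rw [show m+1+2 = m+3 by omega, show m+1+1 = m+2 by omega] at hstep
      rw [hstep, ih2, ih1, Matrix.mulVec_smul, colk m (by omega), if_neg (by omega)]
      module

lemma cheb_deg_coeff : ∀ n : ℕ,
    (T ℝ (n : ℤ)).natDegree ≤ n ∧ (T ℝ (n : ℤ)).coeff n = 2 ^ (n - 1) := by
  intro n
  induction n using Nat.strong_induction_on with
  | _ n ih =>
    match n with
    | 0 => simp [T_zero]
    | 1 => simp [T_one]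
    | (n+2) =>
      obtain ⟨hd1, hc1⟩ := ih (n+1) (by omega)
      obtain ⟨hd0, hc0⟩ := ih n (by omega)
      have hT : T ℝ ((n+2 : ℕ) : ℤ) = 2 * X * T ℝ ((n+1 : ℕ) : ℤ) - T ℝ ((n : ℕ) : ℤ) := by
        rw [show ((n+2:ℕ) : ℤ) = ((n:ℕ) : ℤ) + 2 by push_cast; ring,
          show ((n+1:ℕ) : ℤ) = ((n:ℕ) : ℤ) + 1 by push_cast; ring, T_add_two]
      constructor
      · rw [hT]
        refine le_trans (natDegree_sub_le _ _) ?_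
        rw [max_le_iff]
        refine ⟨le_trans natDegree_mul_le ?_, by omega⟩
        have hx : (2 * X : ℝ[X]).natDegree ≤ 1 :=
          le_trans natDegree_mul_le (by simp)
        omega
      · rw [hT, coeff_sub, two_mul, add_mul, coeff_add, coeff_X_mul,
          coeff_eq_zero_of_natDegree_lt (lt_of_le_of_lt hd0 (by omega)), hc1]
        rw [show n + 1 - 1 = n by omega, show n + 2 - 1 = n + 1 by omega, pow_succ]
        ring


/-- The modified Bessel Hessenberg matrix is annihilated by the `N`-th Chebyshev polynomial of
the first kind: `T_N(H_N) = 0`. Consequently,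
`-2^N H_N^N e₁ = ∑_{i=0}^{N-1} 2 T_{N,i} H_N^i e₁` where `T_{N,i}` is the coefficient of
`x^i` in `T_N(x)`. -/
theorem chebyshev_annihilates_modBesselH (N : ℕ) (hN : 1 ≤ N) :
    Polynomial.aeval (modBesselH N) (Polynomial.Chebyshev.T ℝ (N : ℤ)) = 0 ∧
    (-(2 : ℝ) ^ N) • ((modBesselH N ^ N).mulVec (e1 N)) =
      ∑ i ∈ Finset.range N,
        (2 * (Polynomial.Chebyshev.T ℝ (N : ℤ)).coeff i) •
          ((modBesselH N ^ i).mulVec (e1 N)) := by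
  set M := modBesselH N with hM
  have he : e1 N = stdE N 0 := rfl
  have hM0 : aeval M (T ℝ (N : ℤ)) *ᵥ stdE N 0 = 0 := by
    rw [key hN N le_rfl, if_neg (by omega), stdE_zero N N le_rfl, smul_zero]
  have part1 : aeval M (T ℝ (N : ℤ)) = 0 := by
    ext i j
    have hcol : aeval M (T ℝ (N : ℤ)) *ᵥ stdE N (j : ℕ) = 0 := by
      rcases Nat.eq_zero_or_pos (j : ℕ) with hj | hj
      · rw [hj]; exact hM0
      · have hj2 : stdE N (j : ℕ) = (2 : ℝ) • (aeval M (T ℝ ((j : ℕ) : ℤ)) *ᵥ stdE N 0) := by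
          rw [key hN (j : ℕ) (le_of_lt j.2), if_neg (by omega), smul_smul]
          norm_num
        rw [hj2, Matrix.mulVec_smul, Matrix.mulVec_mulVec, ← _root_.map_mul,
          mul_comm (T ℝ (N : ℤ)) (T ℝ ((j : ℕ) : ℤ)), _root_.map_mul,
          ← Matrix.mulVec_mulVec, hM0, Matrix.mulVec_zero, smul_zero]
    have h2 := congrFun hcol i
    rw [mulVec_stdE _ (j : ℕ) j.2] at h2
    simpa using h2
  refine ⟨part1, ?_⟩
  have hdeg : (T ℝ (N : ℤ)).natDegree < N + 1 :=
    lt_of_le_of_lt (cheb_deg_coeff N).1 (by omega)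
  have hs := Polynomial.aeval_eq_sum_range' hdeg M
  rw [part1, Finset.sum_range_succ, (cheb_deg_coeff N).2] at hs
  have hS : (∑ i ∈ Finset.range N, (T ℝ (N : ℤ)).coeff i • M ^ i) =
      -((2 : ℝ) ^ (N - 1) • M ^ N) := eq_neg_of_add_eq_zero_left hs.symm
  have hpow : (2 : ℝ) ^ N = 2 * 2 ^ (N - 1) := by
    rw [← pow_succ']
    congr 1
    omega
  refine (?_ : _ = (-(2 : ℝ) ^ N) • (M ^ N *ᵥ e1 N)).symm
  calc ∑ i ∈ Finset.range N, (2 * (T ℝ (N : ℤ)).coeff i) • (M ^ i *ᵥ e1 N)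
      = (2 : ℝ) • ((∑ i ∈ Finset.range N, (T ℝ (N : ℤ)).coeff i • M ^ i) *ᵥ e1 N) := by
        rw [sum_mulVec, Finset.smul_sum]
        refine Finset.sum_congr rfl fun i _ => ?_
        rw [smul_mulVec, mul_smul]
    _ = (-(2 : ℝ) ^ N) • (M ^ N *ᵥ e1 N) := by
        rw [hS, Matrix.neg_mulVec, smul_mulVec, smul_neg, smul_smul, ← neg_smul, hpow]
end

section
/- Let N ≥ 1, let H_N be the N×N modified Bessel Hessenberg matrix, and let K_N(H_N,e_1) = [e_1, H_N e_1, …, H_N^{N−1} e_1] be the associated Krylov matrix. Then K_N(H_N,e_1) is invertible, and its inverse M = K_N(H_N,e_1)^{−1} has entries (indexing rows by ℓ = 0,…,N−1 and columns by k = 0,…,N−1): M_{0,0} = 1; M_{ℓ,0} = 0 for ℓ ≥ 1; and M_{ℓ,k} = 2 T_{k,ℓ} for k ≥ 1, where T_{k,ℓ} is the coefficient of x^ℓ in the k-th Chebyshev polynomial of the first kind T_k(x). -/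
/-- The Krylov matrix `K_N(H, e₁) = [e₁, H e₁, …, H^(N-1) e₁]`. -/
noncomputable def krylov {N : ℕ} (H : Matrix (Fin N) (Fin N) ℝ) : Matrix (Fin N) (Fin N) ℝ :=
  fun i j => (H ^ (j : ℕ)).mulVec (e1 N) i

/-!
Multiplication by `x` acts on the Chebyshev basis by `x T₀ = T₁` and `x Tₖ = (Tₖ₋₁ + Tₖ₊₁) / 2`,
and `H_N` acts on the standard basis `e₀, …, e_{N-1}` (so `e1 N = e₀`) in the same way up to
the scaling `e₀ ↔ T₀`, `eₖ ↔ 2 Tₖ`; hence `T₀(H_N) e₀ = e₀` and `Tₖ(H_N) e₀ = eₖ / 2` for `1 ≤ k < N`.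
Since the Krylov matrix sends the coefficient vector of a polynomial `p` of degree `< N` to
`p(H_N) e₀`, the coefficient vectors of `1, 2T₁, …, 2T_{N-1}` form a right inverse of it.
-/

open Polynomial Matrix

section ChebyshevRecurrence

variable {R ι : Type*} [CommRing R] [Fintype ι] [DecidableEq ι]

theorem aeval_chebyshevT_mulVec_of_recurrence (A : Matrix ι ι R) (v : ℕ → ι → R) {K : ℕ}
    (h_one : A *ᵥ v 0 = v 1)
    (h_rec : ∀ n, n + 2 < K → v (n + 2) = (2 : R) • (A *ᵥ v (n + 1)) - v n) :
    ∀ k < K, aeval A (Chebyshev.T R k) *ᵥ v 0 = v k := by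
  intro k
  induction k using Nat.twoStepInduction with
  | zero => simp
  | one =>
    intro _
    simpa using h_one
  | more n ih₀ ih₁ =>
    intro hn
    have hT : Chebyshev.T R ((n + 2 : ℕ) : ℤ) =
        2 * X * Chebyshev.T R ((n + 1 : ℕ) : ℤ) - Chebyshev.T R (n : ℤ) := by
      push_cast
      exact Chebyshev.T_add_two R n
    rw [hT, h_rec n hn, ← ih₀ (by omega), ← ih₁ (by omega)]
    simp [two_mul, add_mul, sub_mulVec, add_mulVec, ← mulVec_mulVec, two_smul]

end ChebyshevRecurrence

section Krylov

variable {N : ℕ}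

theorem krylov_mulVec_coeff (H : Matrix (Fin N) (Fin N) ℝ) {p : ℝ[X]} (hp : p.natDegree < N) :
    krylov H *ᵥ (fun l => p.coeff l) = aeval H p *ᵥ e1 N := by
  rw [aeval_eq_sum_range' hp, sum_mulVec, ← Fin.sum_univ_eq_sum_range]
  ext i
  simp [mulVec, dotProduct, krylov, smul_mulVec, Finset.sum_apply, mul_comm]

theorem krylov_inv_eq_of_aeval_mulVec (H : Matrix (Fin N) (Fin N) ℝ) (p : Fin N → ℝ[X])
    (hdeg : ∀ k, (p k).natDegree < N) (hp : ∀ k, aeval H (p k) *ᵥ e1 N = Pi.single k 1) :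
    IsUnit (krylov H) ∧ (krylov H)⁻¹ = Matrix.of fun (l k : Fin N) => (p k).coeff l := by
  have hmul : krylov H * Matrix.of (fun (l k : Fin N) => (p k).coeff l) = 1 := by
    ext i k
    change (krylov H *ᵥ fun l => (p k).coeff l) i = _
    rw [krylov_mulVec_coeff H (hdeg k), hp k, one_apply, Pi.single_apply]
  exact ⟨IsUnit.of_mul_eq_one _ hmul, inv_eq_right_inv hmul⟩

end Krylov

/-- `natSingle N m` is `e_m` for `m < N` and `0` otherwise: this zero is what truncates the
three-term action of `H_N` at the last row. -/
def natSingle (N m : ℕ) : Fin N → ℝ := fun i => if (i : ℕ) = m then 1 else 0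

theorem natSingle_eq_single {N m : ℕ} (hm : m < N) : natSingle N m = Pi.single ⟨m, hm⟩ 1 := by
  ext i
  simp [natSingle, Pi.single_apply, Fin.ext_iff]

theorem natSingle_of_le {N m : ℕ} (hm : N ≤ m) : natSingle N m = 0 := by
  ext i
  exact if_neg (by omega)

theorem mulVec_natSingle {N m : ℕ} (A : Matrix (Fin N) (Fin N) ℝ) :
    A *ᵥ natSingle N m = fun i => if h : m < N then A i ⟨m, h⟩ else 0 := by
  by_cases hm : m < N
  · ext i
    simp [natSingle_eq_single hm, hm]
  · ext i
    simp [natSingle_of_le (not_lt.mp hm), hm]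

theorem modBesselH_mulVec_natSingle_zero (N : ℕ) :
    modBesselH N *ᵥ natSingle N 0 = (1 / 2 : ℝ) • natSingle N 1 := by
  ext i
  rw [mulVec_natSingle]
  simp only [modBesselH, natSingle, Pi.smul_apply, smul_eq_mul]
  split_ifs <;> simp_all
  omega

theorem modBesselH_mulVec_natSingle_succ {N n : ℕ} (hn : n + 1 < N) :
    modBesselH N *ᵥ natSingle N (n + 1) =
      (if n = 0 then 1 else 1 / 2 : ℝ) • natSingle N n + (1 / 2 : ℝ) • natSingle N (n + 2) := by
  ext i
  rw [mulVec_natSingle]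
  simp only [modBesselH, natSingle, Pi.add_apply, Pi.smul_apply, smul_eq_mul, dif_pos hn]
  split_ifs <;> first | omega | norm_num

noncomputable def chebVec (N k : ℕ) : Fin N → ℝ :=
  (if k = 0 then 1 else 1 / 2 : ℝ) • natSingle N k

theorem aeval_chebyshevT_modBesselH_mulVec_e1 {N k : ℕ} (hk : k < N) :
    aeval (modBesselH N) (Chebyshev.T ℝ k) *ᵥ e1 N = chebVec N k := by
  have he1 : e1 N = chebVec N 0 := by rw [chebVec, if_pos rfl, one_smul]; rfl
  rw [he1]
  refine aeval_chebyshevT_mulVec_of_recurrence _ (chebVec N) ?_ ?_ k hk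
  · simp [chebVec, modBesselH_mulVec_natSingle_zero]
  · intro n hn
    rw [chebVec, chebVec, chebVec, mulVec_smul, modBesselH_mulVec_natSingle_succ (by omega)]
    simp [smul_add, smul_smul]

theorem krylov_modBesselH_inv (N : ℕ) :
    IsUnit (krylov (modBesselH N)) ∧ (krylov (modBesselH N))⁻¹ =
      Matrix.of fun (l k : Fin N) =>
        (if (k : ℕ) = 0 then 1 else (2 : ℝ) • Chebyshev.T ℝ k).coeff l := by
  refine krylov_inv_eq_of_aeval_mulVec _ _ (fun k => ?_) (fun k => ?_)
  · split_ifs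
    · simpa using k.pos
    · refine (natDegree_smul_le _ _).trans_lt ?_
      simp [Chebyshev.natDegree_T]
  · rw [← natSingle_eq_single k.isLt]
    split_ifs with hk
    · rw [map_one, one_mulVec, hk]
      rfl
    · rw [map_smul, smul_mulVec, aeval_chebyshevT_modBesselH_mulVec_e1 k.isLt, chebVec, if_neg hk,
        smul_smul]
      norm_num

theorem krylov_modBesselH_inverse_general (N : ℕ) :
    IsUnit (krylov (modBesselH N)) ∧
    (∀ l k : Fin N, (l : ℕ) = 0 → (k : ℕ) = 0 → (krylov (modBesselH N))⁻¹ l k = 1) ∧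
    (∀ l k : Fin N, 1 ≤ (l : ℕ) → (k : ℕ) = 0 → (krylov (modBesselH N))⁻¹ l k = 0) ∧
    (∀ l k : Fin N, 1 ≤ (k : ℕ) →
      (krylov (modBesselH N))⁻¹ l k =
        2 * (Polynomial.Chebyshev.T ℝ ((k : ℕ) : ℤ)).coeff (l : ℕ)) := by
  obtain ⟨hunit, hinv⟩ := krylov_modBesselH_inv N
  refine ⟨hunit, fun l k hl hk => ?_, fun l k hl hk => ?_, fun l k hk => ?_⟩
  · simp [hinv, hl, hk]
  · simp [hinv, hk, coeff_one, Nat.one_le_iff_ne_zero.mp hl]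
  · simp [hinv, Nat.one_le_iff_ne_zero.mp hk]

/-- The Krylov matrix of the modified Bessel Hessenberg matrix with the first basis vector is
invertible, and its inverse `M` (rows indexed by `ℓ`, columns by `k`, both 0-based) satisfies
`M_{0,0} = 1`, `M_{ℓ,0} = 0` for `ℓ ≥ 1`, and `M_{ℓ,k} = 2 T_{k,ℓ}` for `k ≥ 1`, where
`T_{k,ℓ}` is the coefficient of `x^ℓ` in the `k`-th Chebyshev polynomial of the first kind. -/
theorem krylov_modBesselH_inverse (N : ℕ) (hN : 1 ≤ N) :
    IsUnit (krylov (modBesselH N)) ∧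
    (∀ l k : Fin N, (l : ℕ) = 0 → (k : ℕ) = 0 → (krylov (modBesselH N))⁻¹ l k = 1) ∧
    (∀ l k : Fin N, 1 ≤ (l : ℕ) → (k : ℕ) = 0 → (krylov (modBesselH N))⁻¹ l k = 0) ∧
    (∀ l k : Fin N, 1 ≤ (k : ℕ) →
      (krylov (modBesselH N))⁻¹ l k =
        2 * (Polynomial.Chebyshev.T ℝ ((k : ℕ) : ℤ)).coeff (l : ℕ)) :=
  krylov_modBesselH_inverse_general N
end

section
/- Let A ∈ ℂ^{n×n}, H ∈ ℂ^{N×N}, W ∈ ℂ^{n×N}, u_0 ∈ ℂ^n and t ∈ ℝ. Let A_N be the block matrix [[A, W],[0, H]], let r_N(M) := Σ_{ℓ=N}^∞ M^ℓ/ℓ! and φ_m(M) := Σ_{k=0}^∞ M^k/(k+m)! (both series converge absolutely for any square matrix M). Then the first n entries of r_N(t A_N) applied to the stacked vector (u_0; e_1) satisfy: [I_n 0] r_N(t A_N)(u_0; e_1) = (tA)^N φ_N(tA) u_0 + Σ_{ℓ=1}^{N} t^ℓ (tA)^{N−ℓ} φ_N(tA) W H^{ℓ−1} e_1 + Σ_{ℓ=N+1}^∞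 t^ℓ φ_ℓ(tA) W H^{ℓ−1} e_1. -/
/-- The first standard basis vector of `ℂ^N`. -/
noncomputable def e1C (N : ℕ) : Fin N → ℂ := fun j => if (j : ℕ) = 0 then 1 else 0

/-- The matrix φ-function `φ_m(M) = ∑_{k=0}^∞ M^k / (k+m)!`, defined by its
norm-convergent power series. -/
noncomputable def phiM {d : Type*} [Fintype d] [DecidableEq d] (m : ℕ)
    (M : Matrix d d ℂ) : Matrix d d ℂ :=
  ∑' k : ℕ, ((Nat.factorial (k + m) : ℂ))⁻¹ • M ^ k

/-- The `N`-th Taylor remainder of the matrix exponential,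
`r_N(M) = ∑_{ℓ=N}^∞ M^ℓ / ℓ!`. -/
noncomputable def rM {d : Type*} [Fintype d] [DecidableEq d] (N : ℕ)
    (M : Matrix d d ℂ) : Matrix d d ℂ :=
  ∑' k : ℕ, ((Nat.factorial (N + k) : ℂ))⁻¹ • M ^ (N + k)


/-! The top-right block of `(fromBlocks A W 0 H) ^ m` is `∑_{p<m} A^(m-1-p) W H^p`. In the
series `r_N`, the terms with `p < N` sum to `A^(N-1-p) φ_N(A) W H^p`, while those with
`p = N + q` form a triangular double series; reindexed by `(q, j)`, with `j` the power of `A`, it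
converges absolutely (since `q! j! ≤ (q + j)!`) and sums to `∑_q φ_{N+1+q}(A) W H^(N+q)`.
The scalar `t` only enters through `(t W) (t H)^p = t^(p+1) W H^p`. -/

open Matrix Finset
open scoped Nat

theorem summable_inv_factorial_add_smul_pow {𝕂 𝔸 : Type*} [RCLike 𝕂] [NormedRing 𝔸]
    [NormedAlgebra 𝕂 𝔸] [CompleteSpace 𝔸] (m : ℕ) (x : 𝔸) :
    Summable fun k : ℕ => ((k + m)! : 𝕂)⁻¹ • x ^ k := by
  refine .of_norm_bounded (NormedSpace.norm_expSeries_summable' (𝕂 := 𝕂) x) fun k => ?_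
  rw [norm_smul, norm_smul, norm_inv, norm_inv, RCLike.norm_natCast, RCLike.norm_natCast]
  gcongr
  exact Nat.le_add_right k m

theorem HasSum.matrix_mulVec {X m n R : Type*} [TopologicalSpace R]
    [NonUnitalNonAssocSemiring R] [IsTopologicalSemiring R] [Fintype n]
    {f : X → Matrix m n R} {M : Matrix m n R} (h : HasSum f M) (v : n → R) :
    HasSum (fun x => f x *ᵥ v) (M *ᵥ v) :=
  h.map (mulVec.addMonoidHomLeft v) (continuous_id.matrix_mulVec continuous_const)

theorem HasSum.sum_antidiagonal {A E : Type*} [AddMonoid A] [HasAntidiagonal A]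
    [AddCommMonoid E] [TopologicalSpace E] [ContinuousAdd E] [RegularSpace E]
    {g : A × A → E} {S : E} (h : HasSum g S) :
    HasSum (fun s => ∑ x ∈ antidiagonal s, g x) S :=
  (HasAntidiagonal.sigmaAntidiagonalEquivProd.hasSum_iff.mpr h).sigma fun s =>
    (antidiagonal s).hasSum g

theorem Matrix.fromBlocks_zero₂₁_pow {l n R : Type*} [Fintype l] [Fintype n] [DecidableEq l]
    [DecidableEq n] [Semiring R] (A : Matrix l l R) (W : Matrix l n R) (H : Matrix n n R)
    (m : ℕ) :
    fromBlocks A W 0 H ^ m =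
      fromBlocks (A ^ m) (∑ p ∈ range m, A ^ (m - 1 - p) * W * H ^ p) 0 (H ^ m) := by
  induction m with
  | zero => simp [fromBlocks_one]
  | succ m ih =>
    rw [pow_succ', ih, fromBlocks_multiply, sum_range_succ, Matrix.mul_sum]
    simp only [Matrix.mul_zero, Matrix.zero_mul, add_zero, zero_add, ← pow_succ']
    congr 2
    · refine sum_congr rfl fun p hp => ?_
      rw [← Matrix.mul_assoc, ← Matrix.mul_assoc, ← pow_succ']
      have := mem_range.mp hp
      congr 3
      omega
    · simp

theorem Matrix.fromBlocks_zero₂₁_pow_mulVec_inl {l n R : Type*} [Fintype l] [Fintype n]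
    [DecidableEq l] [DecidableEq n] [Semiring R] (A : Matrix l l R) (W : Matrix l n R)
    (H : Matrix n n R) (m : ℕ) (u : l → R) (e : n → R) :
    (fun i => (fromBlocks A W 0 H ^ m *ᵥ Sum.elim u e) (Sum.inl i)) =
      A ^ m *ᵥ u + ∑ p ∈ range m, A ^ (m - 1 - p) *ᵥ (W *ᵥ (H ^ p *ᵥ e)) := by
  rw [fromBlocks_zero₂₁_pow, fromBlocks_mulVec]
  ext i
  simp [sum_mulVec, mulVec_mulVec, Matrix.mul_assoc]

section LinftyOp

-- Any matrix norm would do: norms only serve to prove convergence.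
attribute [local instance] Matrix.linftyOpNormedAddCommGroup Matrix.linftyOpNormedSpace
  Matrix.linftyOpNormedRing Matrix.linftyOpNormedAlgebra

variable {ι κ : Type*} [Fintype ι] [DecidableEq ι] [Fintype κ] [DecidableEq κ]

theorem hasSum_phiM (m : ℕ) (A : Matrix ι ι ℂ) :
    HasSum (fun k : ℕ => ((k + m)! : ℂ)⁻¹ • A ^ k) (phiM m A) :=
  (summable_inv_factorial_add_smul_pow (𝕂 := ℂ) m A).hasSum

theorem hasSum_rM (N : ℕ) (A : Matrix ι ι ℂ) :
    HasSum (fun k : ℕ => ((N + k)! : ℂ)⁻¹ • A ^ (N + k)) (rM N A) := by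
  refine (((hasSum_phiM N A).mul_left (A ^ N)).summable.congr fun k => ?_).hasSum
  rw [Matrix.mul_smul, ← pow_add, add_comm k]

theorem hasSum_pow_mul_phiM_mulVec (m j : ℕ) (A : Matrix ι ι ℂ) (v : ι → ℂ) :
    HasSum (fun k : ℕ => ((m + k)! : ℂ)⁻¹ • (A ^ (j + k) *ᵥ v)) ((A ^ j * phiM m A) *ᵥ v) := by
  convert ((hasSum_phiM m A).mul_left (A ^ j)).matrix_mulVec v using 2 with k
  rw [Matrix.mul_smul, ← pow_add, smul_mulVec, add_comm k]

theorem norm_pow_mulVec_le (A : Matrix ι ι ℂ) (v : ι → ℂ) (j : ℕ) :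
    ‖A ^ j *ᵥ v‖ ≤ ‖A‖ ^ j * ‖v‖ := by
  induction j with
  | zero => simp
  | succ j ih =>
    rw [pow_succ', ← mulVec_mulVec, pow_succ', mul_assoc]
    exact (linfty_opNorm_mulVec _ _).trans (by gcongr)

theorem hasSum_inv_factorial_smul_sum_pow_mulVec (m : ℕ) (A : Matrix ι ι ℂ) {w : ℕ → ι → ℂ}
    (hw : Summable fun q => ‖w q‖ / q !) :
    HasSum (fun k : ℕ => ((m + k)! : ℂ)⁻¹ • ∑ q ∈ range k, A ^ (k - 1 - q) *ᵥ w q)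
      (∑' q, phiM (m + 1 + q) A *ᵥ w q) := by
  let g : ℕ × ℕ → ι → ℂ := fun x => ((m + 1 + x.1 + x.2)! : ℂ)⁻¹ • (A ^ x.2 *ᵥ w x.1)
  have hg : Summable g := by
    refine .of_norm_bounded (hw.mul_of_nonneg (Real.summable_pow_div_factorial ‖A‖)
      (fun q => by positivity) fun j => by positivity) fun ⟨q, j⟩ => ?_
    have hfact : (q ! * j ! : ℝ) ≤ (m + 1 + q + j)! := by
      exact_mod_cast (Nat.le_of_dvd (Nat.factorial_pos _)
        (Nat.factorial_mul_factorial_dvd_factorial_add q j)).trans (Nat.factorial_le (by omega))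
    calc ‖g (q, j)‖ = ((m + 1 + q + j)! : ℝ)⁻¹ * ‖A ^ j *ᵥ w q‖ := by simp [g, norm_smul]
      _ ≤ (q ! * j ! : ℝ)⁻¹ * (‖A‖ ^ j * ‖w q‖) := by
        gcongr
        exact norm_pow_mulVec_le A (w q) j
      _ = ‖w q‖ / q ! * (‖A‖ ^ j / j !) := by ring
  have hfiber : ∀ q, HasSum (fun j => g (q, j)) (phiM (m + 1 + q) A *ᵥ w q) := fun q => by
    simpa [g] using hasSum_pow_mul_phiM_mulVec (m + 1 + q) 0 A (w q)
  have h := hg.hasSum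
  rw [← (h.prod_fiberwise hfiber).tsum_eq] at h
  -- The `k = 0` term vanishes; for `k = s + 1` the inner sum runs over the antidiagonal of `s`.
  have hshift : HasSum (fun s => ((m + (s + 1))! : ℂ)⁻¹ •
      ∑ q ∈ range (s + 1), A ^ (s + 1 - 1 - q) *ᵥ w q) (∑' q, phiM (m + 1 + q) A *ᵥ w q) := by
    convert h.sum_antidiagonal using 2 with s
    rw [Nat.sum_antidiagonal_eq_sum_range_succ_mk, smul_sum]
    refine sum_congr rfl fun q hq => ?_
    have := mem_range.mp hq
    show _ = ((m + 1 + q + (s - q))! : ℂ)⁻¹ • (A ^ (s - q) *ᵥ w q)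
    congr 4; omega
  rw [← hasSum_nat_add_iff' 1]
  simpa using hshift

theorem rM_fromBlocks_zero₂₁_mulVec_inl (N : ℕ) (A : Matrix ι ι ℂ) (W : Matrix ι κ ℂ)
    (H : Matrix κ κ ℂ) (u : ι → ℂ) (e : κ → ℂ) :
    (fun i => (rM N (fromBlocks A W 0 H) *ᵥ Sum.elim u e) (Sum.inl i)) =
      (A ^ N * phiM N A) *ᵥ u +
        ∑ p ∈ range N, (A ^ (N - (p + 1)) * phiM N A) *ᵥ (W *ᵥ (H ^ p *ᵥ e)) +
        ∑' q, phiM (N + 1 + q) A *ᵥ (W *ᵥ (H ^ (N + q) *ᵥ e)) := by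
  set v : ℕ → ι → ℂ := fun p => W *ᵥ (H ^ p *ᵥ e)
  have hv : Summable fun q => ‖v (N + q)‖ / q ! := by
    refine .of_nonneg_of_le (fun q => by positivity) (fun q => ?_)
      ((Real.summable_pow_div_factorial ‖H‖).mul_left (‖W‖ * ‖H‖ ^ N * ‖e‖))
    calc ‖v (N + q)‖ / q ! ≤ ‖W‖ * (‖H‖ ^ (N + q) * ‖e‖) / q ! := by
          gcongr
          exact (linfty_opNorm_mulVec W _).trans (by gcongr; exact norm_pow_mulVec_le H e _)
      _ = ‖W‖ * ‖H‖ ^ N * ‖e‖ * (‖H‖ ^ q / q !) := by ring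
  have hpow : HasSum (fun k => ((N + k)! : ℂ)⁻¹ •
      (A ^ (N + k) *ᵥ u + ∑ p ∈ range (N + k), A ^ (N + k - 1 - p) *ᵥ v p))
      (fun i => (rM N (fromBlocks A W 0 H) *ᵥ Sum.elim u e) (Sum.inl i)) := by
    refine Pi.hasSum.mpr fun i => ?_
    refine (Pi.hasSum.mp ((hasSum_rM N _).matrix_mulVec (Sum.elim u e)) (Sum.inl i)).congr_fun
      fun k => ?_
    rw [smul_mulVec, Pi.smul_apply, Pi.smul_apply, ← fromBlocks_zero₂₁_pow_mulVec_inl]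
  have hsplit := ((hasSum_pow_mul_phiM_mulVec N N A u).add (hasSum_sum (s := range N) fun p _ =>
    hasSum_pow_mul_phiM_mulVec N (N - (p + 1)) A (v p))).add
    (hasSum_inv_factorial_smul_sum_pow_mulVec N A hv)
  refine hpow.unique (hsplit.congr_fun fun k => ?_)
  rw [sum_range_add, smul_add, smul_add, smul_sum, add_assoc]
  congr 2
  · refine sum_congr rfl fun p hp => ?_
    have := mem_range.mp hp
    congr 3
    omega
  · refine congrArg _ (sum_congr rfl fun q _ => ?_)
    rw [show N + k - 1 - (N + q) = k - 1 - q by omega]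

end LinftyOp

/-- Expression for the first `n` entries of the exponential remainder applied to the stacked
vector: with `A_N = [[A, W], [0, H]]`,
`[Iₙ 0] r_N(t A_N)(u₀; e₁) = (tA)^N φ_N(tA) u₀ + ∑_{ℓ=1}^N t^ℓ (tA)^{N-ℓ} φ_N(tA) W H^{ℓ-1} e₁
  + ∑_{ℓ=N+1}^∞ t^ℓ φ_ℓ(tA) W H^{ℓ-1} e₁`. -/
theorem remainder_block_expression (n N : ℕ) (A : Matrix (Fin n) (Fin n) ℂ)
    (H : Matrix (Fin N) (Fin N) ℂ) (W : Matrix (Fin n) (Fin N) ℂ)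
    (u0 : Fin n → ℂ) (t : ℝ) :
    (fun i : Fin n =>
        (rM N ((t : ℂ) • Matrix.fromBlocks A W 0 H)).mulVec (Sum.elim u0 (e1C N)) (Sum.inl i)) =
      (((t : ℂ) • A) ^ N * phiM N ((t : ℂ) • A)).mulVec u0 +
        (∑ l ∈ Finset.range N, ((t : ℂ) ^ (l + 1)) •
          ((((t : ℂ) • A) ^ (N - (l + 1)) * phiM N ((t : ℂ) • A)).mulVec
            (W.mulVec ((H ^ l).mulVec (e1C N))))) +
        ∑' k : ℕ, ((t : ℂ) ^ (N + 1 + k)) •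
          ((phiM (N + 1 + k) ((t : ℂ) • A)).mulVec
            (W.mulVec ((H ^ (N + k)).mulVec (e1C N)))) := by
  have hscale : ∀ p, ((t : ℂ) • W) *ᵥ (((t : ℂ) • H) ^ p *ᵥ e1C N) =
      (t : ℂ) ^ (p + 1) • (W *ᵥ (H ^ p *ᵥ e1C N)) := fun p => by
    simp only [smul_pow, smul_mulVec, mulVec_smul, smul_smul, pow_succ]
  rw [fromBlocks_smul, smul_zero, rM_fromBlocks_zero₂₁_mulVec_inl]
  simp only [hscale, mulVec_smul, Nat.add_right_comm N _ 1]
end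

section
/- Let N ≥ 2, let t_0, …, t_{N−1} be the zeros of the N-th Chebyshev polynomial of the first kind, t_k = cos((2k+1)π/(2N)), and let V ∈ ℝ^{N×N} be the matrix with entries V_{i,j} = T_{i−1}(t_{j−1}) för 1 ≤ i,j ≤ N, where T_m is the m-th Chebyshev polynomial of the first kind. Then V is invertible and its spectral-norm condition number equals √2: ‖V‖ · ‖V^{−1}‖ = √2. -/
/-!
Gauss–Chebyshev quadrature at the `N` zeros `t_k` of `T_N` is exact for polynomials of degree
`< 2N`, so `∑ₖ T_i(t_k) T_j(t_k) = (N/π) ∫ T_i T_j dx/√(1-x²)` for `i, j < N`, and continuous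
orthogonality of the `T_i` makes the rows of `V` orthogonal: `V Vᵀ = diag(N, N/2, …, N/2)`.
By the C⋆-identity `‖V‖² = ‖V Vᵀ‖ = N` and `‖V⁻¹‖² = ‖(V Vᵀ)⁻¹‖ = 2/N`.
-/

open scoped Matrix.Norms.L2Operator

namespace Polynomial.Chebyshev

open Real Finset MeasureTheory

theorem sumZeroes_T_mul_T {n i j : ℕ} (hn : n ≠ 0) (hij : i + j < 2 * n) :
    sumZeroes n (T ℝ i * T ℝ j) = ∫ x, (T ℝ i).eval x * (T ℝ j).eval x ∂measureT := by
  have hdeg : (T ℝ i * T ℝ j).degree < 2 * n := by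
    rw [degree_mul, degree_T, degree_T]
    exact_mod_cast hij
  simp_rw [← eval_mul]
  exact (integral_eq_sumZeroes hn hdeg).symm

theorem sum_eval_T_mul_eval_T_zeroes {n i j : ℕ} (hi : i < n) (hj : j < n) :
    ∑ k ∈ range n, (T ℝ i).eval (cos ((2 * k + 1) / (2 * n) * π)) *
        (T ℝ j).eval (cos ((2 * k + 1) / (2 * n) * π)) =
      if i = j then (if i = 0 then (n : ℝ) else n / 2) else 0 := by
  have hn : n ≠ 0 := by omega
  have hsum : ∑ k ∈ range n, (T ℝ i).eval (cos ((2 * k + 1) / (2 * n) * π)) *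
        (T ℝ j).eval (cos ((2 * k + 1) / (2 * n) * π)) =
      n / π * ∫ x, (T ℝ i).eval x * (T ℝ j).eval x ∂measureT := by
    have hcancel : (n : ℝ) / π * (π / n) = 1 := by field_simp
    rw [← sumZeroes_T_mul_T hn (by omega), sumZeroes, ← mul_assoc, hcancel, one_mul]
    simp_rw [eval_mul]
  rw [hsum]
  split_ifs with hij hi0
  · subst hij hi0
    rw [Nat.cast_zero, integral_eval_T_real_mul_self_measureT_zero]
    field_simp
  · subst hij
    rw [integral_T_real_mul_self_measureT_of_ne_zero hi0]
    field_simp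
  · rw [integral_eval_T_real_mul_eval_T_real_measureT_of_ne hij, mul_zero]

end Polynomial.Chebyshev

theorem pi_norm_eq_norm_apply_of_forall_le {ι E : Type*} [Fintype ι] [SeminormedAddGroup E]
    {f : ι → E} {i₀ : ι} (hle : ∀ i, ‖f i‖ ≤ ‖f i₀‖) : ‖f‖ = ‖f i₀‖ :=
  le_antisymm ((pi_norm_le_iff_of_nonneg (norm_nonneg _)).2 hle) (norm_le_pi_norm f i₀)

namespace Matrix

variable {𝕜 n : Type*} [RCLike 𝕜] [Fintype n] [DecidableEq n]

theorem l2_opNorm_mul_self_of_mul_conjTranspose_eq_diagonal {A : Matrix n n 𝕜} {d : n → 𝕜}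
    (h : A * Aᴴ = diagonal d) : ‖A‖ * ‖A‖ = ‖d‖ := by
  rw [← CStarRing.norm_self_mul_star, star_eq_conjTranspose, h, l2_opNorm_diagonal]

theorem conjTranspose_inv_mul_inv_of_mul_conjTranspose_eq_diagonal {A : Matrix n n 𝕜}
    {d : n → 𝕜} (h : A * Aᴴ = diagonal d) (hd : ∀ i, d i ≠ 0) :
    A⁻¹ᴴ * A⁻¹ = diagonal d⁻¹ := by
  rw [conjTranspose_nonsing_inv, ← mul_inv_rev, h]
  refine inv_eq_left_inv ?_
  rw [diagonal_mul_diagonal, ← diagonal_one]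
  exact congrArg diagonal (funext fun i => inv_mul_cancel₀ (hd i))

theorem isUnit_of_mul_conjTranspose_eq_diagonal {A : Matrix n n 𝕜} {d : n → 𝕜}
    (h : A * Aᴴ = diagonal d) (hd : ∀ i, d i ≠ 0) : IsUnit A := by
  have : IsUnit (A * Aᴴ).det := by
    rw [h, det_diagonal]
    exact (Finset.prod_ne_zero_iff.2 fun i _ => hd i).isUnit
  rw [det_mul] at this
  exact (isUnit_iff_isUnit_det A).2 (isUnit_of_mul_isUnit_left this)

theorem l2_opNorm_mul_l2_opNorm_inv_of_mul_conjTranspose_eq_diagonal {A : Matrix n n 𝕜}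
    {d : n → 𝕜} (h : A * Aᴴ = diagonal d) (hd : ∀ i, d i ≠ 0) :
    ‖A‖ * ‖A⁻¹‖ = √(‖d‖ * ‖d⁻¹‖) := by
  have hnorm := l2_opNorm_mul_self_of_mul_conjTranspose_eq_diagonal h
  have hnorm_inv : ‖A⁻¹‖ * ‖A⁻¹‖ = ‖d⁻¹‖ := by
    rw [← l2_opNorm_conjTranspose_mul_self,
      conjTranspose_inv_mul_inv_of_mul_conjTranspose_eq_diagonal h hd, l2_opNorm_diagonal]
  rw [← hnorm, ← hnorm_inv, show ‖A‖ * ‖A‖ * (‖A⁻¹‖ * ‖A⁻¹‖) = (‖A‖ * ‖A⁻¹‖) ^ 2 by ring,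
    Real.sqrt_sq (by positivity)]

end Matrix

section ChebyshevGram

variable {N : ℕ}

/-- The squared row norms `∑ₖ T_i(t_k)²` of the Chebyshev–Vandermonde matrix. -/
noncomputable def chebyshevGramDiag (N : ℕ) (i : Fin N) : ℝ := if (i : ℕ) = 0 then N else N / 2

theorem chebyshevGramDiag_pos (i : Fin N) : 0 < chebyshevGramDiag N i := by
  have : (0 : ℝ) < N := by exact_mod_cast i.pos
  unfold chebyshevGramDiag
  split_ifs <;> positivity

theorem norm_chebyshevGramDiag (hN : 0 < N) : ‖chebyshevGramDiag N‖ = N := by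
  rw [pi_norm_eq_norm_apply_of_forall_le (i₀ := ⟨0, hN⟩)]
  · simp [chebyshevGramDiag]
  · intro i
    rw [Real.norm_of_nonneg (chebyshevGramDiag_pos _).le,
      Real.norm_of_nonneg (chebyshevGramDiag_pos _).le]
    simp only [chebyshevGramDiag, if_true]
    split_ifs <;> linarith [(Nat.cast_nonneg N : (0 : ℝ) ≤ N)]

theorem norm_inv_chebyshevGramDiag (hN : 2 ≤ N) : ‖(chebyshevGramDiag N)⁻¹‖ = 2 / N := by
  rw [pi_norm_eq_norm_apply_of_forall_le (i₀ := ⟨1, hN⟩)]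
  · simp [chebyshevGramDiag]
  · intro i
    simp only [Pi.inv_apply, norm_inv, Real.norm_of_nonneg (chebyshevGramDiag_pos _).le]
    simp only [chebyshevGramDiag, one_ne_zero, if_false, inv_div]
    split_ifs
    · rw [inv_eq_one_div]
      gcongr
      norm_num
    · rw [inv_div]

end ChebyshevGram

open Matrix Polynomial.Chebyshev in
/-- The Chebyshev Vandermonde-like matrix `V` with entries `V_{i,j} = T_{i-1}(t_{j-1})`
(1-based indices), where `t_k = cos((2k+1)π/(2N))` are the zeros of the `N`-th Chebyshev
polynomial of the first kind, is invertible and its spectral-norm condition number is `√2`. -/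
theorem chebyshev_vandermonde_condition_number (N : ℕ) (hN : 2 ≤ N)
    (V : Matrix (Fin N) (Fin N) ℝ)
    (hV : ∀ i j : Fin N, V i j = (Polynomial.Chebyshev.T ℝ ((i : ℕ) : ℤ)).eval
      (Real.cos ((2 * (j : ℕ) + 1) * Real.pi / (2 * N)))) :
    IsUnit V ∧ ‖V‖ * ‖V⁻¹‖ = Real.sqrt 2 := by
  have hgram : V * Vᴴ = diagonal (chebyshevGramDiag N) := by
    ext i j
    simp only [mul_apply, conjTranspose_apply, star_trivial, hV, ← div_mul_eq_mul_div,
      diagonal_apply, Fin.ext_iff, chebyshevGramDiag]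
    exact (Fin.sum_univ_eq_sum_range (fun k : ℕ => _) N).trans
      (sum_eval_T_mul_eval_T_zeroes i.isLt j.isLt)
  have hd : ∀ i, chebyshevGramDiag N i ≠ 0 := fun i => (chebyshevGramDiag_pos i).ne'
  refine ⟨isUnit_of_mul_conjTranspose_eq_diagonal hgram hd, ?_⟩
  rw [l2_opNorm_mul_l2_opNorm_inv_of_mul_conjTranspose_eq_diagonal hgram hd,
    norm_chebyshevGramDiag (by omega), norm_inv_chebyshevGramDiag hN,
    mul_div_cancel₀ _ (by positivity)]
end
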